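/- Let n ≥ 2, p > 1 and p ≠ n. If Z̃ : K_o^n → ⟨K_c^n, #̃_p⟩ is a normalized symmetric L_p-Blaschke valuation, then the map Z : K_o^n → ⟨K_c^n, #_p⟩ defined by ZK = V(Z̃K)^{1/(p−n)} Z̃K is a symmetric L_p-Blaschke valuation. Moreover, Z is continuous if Z̃ is continuous; Z is SL(n) covariant (respectively, SL(n) contravariant) if Z̃ is SL(n) covariant (respectively, SL(n) contravariant); and Z is homogeneous of degree qp/(p − n) if Z̃ is homogeneous of degree q. -/

import Mathlib

open MeasureTheory Metric Set Filter Matrix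
open scoped Pointwise ENNReal NNReal Topology RealInnerProductSpace

noncomputable section

abbrev En (n : ℕ) : Type := EuclideanSpace ℝ (Fin n)

/-- The unit sphere `S^{n-1}` in `ℝ^n`. -/
def usphere (n : ℕ) : Set (En n) := Metric.sphere (0 : En n) 1

/-- A convex body: a nonempty compact convex subset of `ℝ^n`. -/
def IsCB {n : ℕ} (K : Set (En n)) : Prop :=
  K.Nonempty ∧ IsCompact K ∧ Convex ℝ K

/-- `K̄_o^n`: convex bodies containing the origin. -/
def Kob (n : ℕ) : Set (Set (En n)) := {K | IsCB K ∧ (0 : En n) ∈ K}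

/-- `K_o^n`: `n`-dimensional convex bodies containing the origin. -/
def Ko (n : ℕ) : Set (Set (En n)) :=
  {K | IsCB K ∧ (0 : En n) ∈ K ∧ (interior K).Nonempty}

/-- `K_c^n`: `n`-dimensional origin-symmetric convex bodies. -/
def Kc (n : ℕ) : Set (Set (En n)) :=
  {K | IsCB K ∧ (interior K).Nonempty ∧ ∀ x ∈ K, -x ∈ K}

/-- Support function `h_K`. -/
def suppFn {n : ℕ} (K : Set (En n)) (x : En n) : ℝ :=
  sSup ((fun y => ⟪x, y⟫) '' K)

/-- Radial function `ρ_K`. -/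
def radialFn {n : ℕ} (K : Set (En n)) (u : En n) : ℝ :=
  sSup {r : ℝ | 0 ≤ r ∧ r • u ∈ K}

/-- Reverse spherical image of `K` at `ω`: boundary points of `K` having an outer
unit normal belonging to `ω`. -/
def revImg {n : ℕ} (K ω : Set (En n)) : Set (En n) :=
  {x ∈ frontier K | ∃ u ∈ ω ∩ usphere n, ∀ y ∈ K, ⟪u, y⟫ ≤ ⟪u, x⟫}

/-- `S` is the classical surface-area-measure operator, characterized on
`n`-dimensional convex bodies by `S(K, ω) = H^{n-1}(τ(K, ω))`. -/
def IsSurfMeas {n : ℕ} (S : Set (En n) → Measure (En n)) : Prop :=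
  ∀ K : Set (En n), IsCB K → (interior K).Nonempty →
    ∀ ω : Set (En n), MeasurableSet ω → S K ω = μH[(n : ℝ) - 1] (revImg K ω)

/-- The `L_p`-surface area measure `S_p(K,·) = h_K^{1-p} S(K,·)`. -/
def lpSAM {n : ℕ} (p : ℝ) (S : Set (En n) → Measure (En n)) (K : Set (En n)) :
    Measure (En n) :=
  (S K).withDensity fun u => ENNReal.ofReal (suppFn K u ^ (1 - p))

/-- The volume-normalized `L_p`-surface area measure `S_p(K,·)/V(K)`. -/
def nlpSAM {n : ℕ} (p : ℝ) (S : Set (En n) → Measure (En n)) (K : Set (En n)) :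
    Measure (En n) :=
  (volume K)⁻¹ • lpSAM p S K

/-- Spherical Lebesgue measure on `S^{n-1}`. -/
def sphMeas (n : ℕ) : Measure (En n) := μH[(n : ℝ) - 1].restrict (usphere n)

/-- The action of a matrix on a subset of `ℝ^n`. -/
def matAct {n : ℕ} (A : Matrix (Fin n) (Fin n) ℝ) (K : Set (En n)) : Set (En n) :=
  (Matrix.toEuclideanLin A) '' K

/-- `SL(n)` covariance on a class `Q` of bodies. -/
def SLcov {n : ℕ} (Q : Set (Set (En n))) (Z : Set (En n) → Set (En n)) : Prop :=
  ∀ φ : Matrix.SpecialLinearGroup (Fin n) ℝ, ∀ K ∈ Q,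
    Z (matAct (φ : Matrix (Fin n) (Fin n) ℝ) K) =
      matAct (φ : Matrix (Fin n) (Fin n) ℝ) (Z K)

/-- `SL(n)` contravariance on a class `Q` of bodies. -/
def SLcontra {n : ℕ} (Q : Set (Set (En n))) (Z : Set (En n) → Set (En n)) : Prop :=
  ∀ φ : Matrix.SpecialLinearGroup (Fin n) ℝ, ∀ K ∈ Q,
    Z (matAct (φ : Matrix (Fin n) (Fin n) ℝ) K) =
      matAct (((φ : Matrix (Fin n) (Fin n) ℝ)ᵀ)⁻¹) (Z K)

/-- Homogeneity of degree `q` on a class `Q` of bodies. -/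
def HomogDeg {n : ℕ} (Q : Set (Set (En n))) (Z : Set (En n) → Set (En n)) (q : ℝ) : Prop :=
  ∀ K ∈ Q, ∀ lam : ℝ, 0 < lam → Z (lam • K) = lam ^ q • Z K

/-- Continuity (with respect to the Hausdorff metric) on a class `Q` of bodies. -/
def ContOnQ {n : ℕ} (Q : Set (Set (En n))) (Z : Set (En n) → Set (En n)) : Prop :=
  ∀ K ∈ Q, ∀ F : ℕ → Set (En n), (∀ i, F i ∈ Q) →
    Tendsto (fun i => hausdorffDist (F i) K) atTop (𝓝 0) →
    Tendsto (fun i => hausdorffDist (Z (F i)) (Z K)) atTop (𝓝 0)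

/-- `Z : K_o^n → ⟨K_c^n, #̃_p⟩` is a normalized symmetric `L_p`-Blaschke valuation. -/
def IsNormBlaschkeVal {n : ℕ} (p : ℝ) (S : Set (En n) → Measure (En n))
    (Z : Set (En n) → Set (En n)) : Prop :=
  (∀ K ∈ Ko n, Z K ∈ Kc n) ∧
  ∀ K L : Set (En n), K ∈ Ko n → L ∈ Ko n → K ∪ L ∈ Ko n → K ∩ L ∈ Ko n →
    nlpSAM p S (Z (K ∪ L)) + nlpSAM p S (Z (K ∩ L)) =
      nlpSAM p S (Z K) + nlpSAM p S (Z L)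

/-- `Z : K_o^n → ⟨K_c^n, #_p⟩` is a symmetric `L_p`-Blaschke valuation. -/
def IsBlaschkeVal {n : ℕ} (p : ℝ) (S : Set (En n) → Measure (En n))
    (Z : Set (En n) → Set (En n)) : Prop :=
  (∀ K ∈ Ko n, Z K ∈ Kc n) ∧
  ∀ K L : Set (En n), K ∈ Ko n → L ∈ Ko n → K ∪ L ∈ Ko n → K ∩ L ∈ Ko n →
    lpSAM p S (Z (K ∪ L)) + lpSAM p S (Z (K ∩ L)) =
      lpSAM p S (Z K) + lpSAM p S (Z L)

/-- The density `(1/2) ρ_K^{n+p} + (1/2) ρ_{-K}^{n+p}`. -/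
def curvDens {n : ℕ} (p : ℝ) (K : Set (En n)) : En n → ℝ≥0∞ := fun u =>
  ENNReal.ofReal ((1 / 2) * radialFn K u ^ ((n : ℝ) + p)
    + (1 / 2) * radialFn (-K) u ^ ((n : ℝ) + p))

/-- `Λ` is the normalized symmetric `L_p`-curvature image operator `Λ̃_c^p`. -/
def IsNormCurvImg {n : ℕ} (p : ℝ) (S : Set (En n) → Measure (En n))
    (Λ : Set (En n) → Set (En n)) : Prop :=
  ∀ K ∈ Ko n, Λ K ∈ Kc n ∧
    nlpSAM p S (Λ K) = (sphMeas n).withDensity (curvDens p K)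

/-- `Λ` is the symmetric `L_p`-curvature image operator `Λ_c^p`. -/
def IsCurvImg {n : ℕ} (p : ℝ) (S : Set (En n) → Measure (En n))
    (Λ : Set (En n) → Set (En n)) : Prop :=
  ∀ K ∈ Ko n, Λ K ∈ Kc n ∧
    lpSAM p S (Λ K) = (sphMeas n).withDensity (curvDens p K)

/-- The `L_p`-cosine transform of a measure. -/
def cosT {n : ℕ} (p : ℝ) (μ : Measure (En n)) (x : En n) : ℝ :=
  (∫⁻ v, ENNReal.ofReal (|⟪x, v⟫| ^ p) ∂μ).toReal

/-- `Z` is an `L_p`-Minkowski valuation on the class `Q`. -/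
def IsLpMinkVal {n : ℕ} (p : ℝ) (Q : Set (Set (En n))) (Z : Set (En n) → Set (En n)) : Prop :=
  ∀ K L : Set (En n), K ∈ Q → L ∈ Q → K ∪ L ∈ Q → K ∩ L ∈ Q →
    ∀ x : En n, suppFn (Z (K ∪ L)) x ^ p + suppFn (Z (K ∩ L)) x ^ p
      = suppFn (Z K) x ^ p + suppFn (Z L) x ^ p

/-- The rotation of `ℝ²` by the angle `π/2`. -/
def rotHalfPi : Matrix (Fin 2) (Fin 2) ℝ := !![0, -1; 1, 0]



-- ===== auxiliary lemmas =====

section Aux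

variable {n : ℕ}

lemma Kc_zero_mem {M : Set (En n)} (hM : M ∈ Kc n) : (0 : En n) ∈ M := by
  obtain ⟨⟨⟨x, hx⟩, _, hconv⟩, _, hsym⟩ := hM
  have h := hconv hx (hsym x hx) (a := 1/2) (b := 1/2) (by norm_num) (by norm_num) (by norm_num)
  simpa using h

lemma Kc_vol_pos {M : Set (En n)} (hM : M ∈ Kc n) : 0 < volume M :=
  Measure.measure_pos_of_nonempty_interior volume hM.2.1

lemma Kc_vol_ne_top {M : Set (En n)} (hM : M ∈ Kc n) : volume M ≠ ⊤ :=
  hM.1.2.1.measure_lt_top.ne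

lemma suppFn_smul {c : ℝ} (hc : 0 ≤ c) (M : Set (En n)) (x : En n) :
    suppFn (c • M) x = c * suppFn M x := by
  have himg : (fun y => ⟪x, y⟫) '' (c • M) = c • ((fun y => ⟪x, y⟫) '' M) := by
    rw [← Set.image_smul, Set.image_image, ← Set.image_smul, Set.image_image]
    simp only [smul_eq_mul]
    exact Set.image_congr fun a _ => real_inner_smul_right x a c
  rw [suppFn, himg, Real.sSup_smul_of_nonneg hc, smul_eq_mul, suppFn]

lemma suppFn_nonneg {M : Set (En n)} (h0 : (0 : En n) ∈ M) (hb : IsCompact M) (x : En n) :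
    0 ≤ suppFn M x := by
  have hcont : Continuous fun y : En n => ⟪x, y⟫ := (innerSL ℝ x).continuous
  have : (0 : ℝ) ∈ (fun y => ⟪x, y⟫) '' M := ⟨0, h0, by simp⟩
  exact le_csSup ((hb.image hcont).bddAbove) this

lemma revImg_smul {c : ℝ} (hc : 0 < c) (M ω : Set (En n)) :
    revImg (c • M) ω = c • revImg M ω := by
  have hfr : frontier (c • M) = c • frontier M := by
    rw [frontier, frontier, closure_smul₀' hc.ne' _, interior_smul₀ hc.ne', Set.smul_set_sdiff₀ hc.ne']
  ext z
  constructor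
  · rintro ⟨hzf, u, hu, hnorm⟩
    rw [hfr] at hzf
    obtain ⟨x, hx, rfl⟩ := hzf
    refine ⟨x, ⟨hx, u, hu, fun y hy => ?_⟩, rfl⟩
    have := hnorm (c • y) (Set.smul_mem_smul_set hy)
    rw [real_inner_smul_right, real_inner_smul_right] at this
    exact le_of_mul_le_mul_left this hc
  · rintro ⟨x, ⟨hx, u, hu, hnorm⟩, rfl⟩
    refine ⟨by rw [hfr]; exact Set.smul_mem_smul_set hx, u, hu, fun y hy => ?_⟩
    obtain ⟨y', hy', rfl⟩ := hy
    rw [real_inner_smul_right, real_inner_smul_right]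
    exact mul_le_mul_of_nonneg_left (hnorm y' hy') hc.le

end Aux

section Aux2

variable {n : ℕ} {p : ℝ} {S : Set (En n) → Measure (En n)}

lemma smul_CB {c : ℝ} (hc : 0 < c) {M : Set (En n)} (h : IsCB M) : IsCB (c • M) := by
  refine ⟨h.1.smul_set, ?_, h.2.2.smul c⟩
  rw [← Set.image_smul]
  exact h.2.1.image (continuous_const_smul c)

lemma smul_mem_Kc {c : ℝ} (hc : 0 < c) {M : Set (En n)} (hM : M ∈ Kc n) : c • M ∈ Kc n := by
  refine ⟨smul_CB hc hM.1, ?_, ?_⟩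
  · rw [interior_smul₀ hc.ne']
    exact hM.2.1.smul_set
  · rintro x ⟨y, hy, rfl⟩
    exact ⟨-y, hM.2.2 y hy, by simp⟩

lemma surf_smul (hn : 2 ≤ n) (hS : IsSurfMeas S) {c : ℝ} (hc : 0 < c) {M : Set (En n)}
    (hM : IsCB M) (hint : (interior M).Nonempty) :
    S (c • M) = (ENNReal.ofReal (c ^ ((n : ℝ) - 1))) • S M := by
  have hd : (0 : ℝ) ≤ (n : ℝ) - 1 := by
    have : (1 : ℝ) ≤ (n : ℝ) := by exact_mod_cast le_trans one_le_two hn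
    linarith
  ext s hs
  have hint' : (interior (c • M)).Nonempty := by
    rw [interior_smul₀ hc.ne']; exact hint.smul_set
  rw [hS _ (smul_CB hc hM) hint' s hs, revImg_smul hc,
    Measure.hausdorffMeasure_smul₀ hd hc.ne', Measure.smul_apply,
    hS M hM hint s hs, ENNReal.smul_def, smul_eq_mul, smul_eq_mul,
    ENNReal.coe_rpow_of_nonneg _ hd, (show (‖c‖₊ : ℝ≥0∞) = ENNReal.ofReal c from Real.enorm_eq_ofReal hc.le),
    ← ENNReal.ofReal_rpow_of_pos hc]

lemma lpSAM_smul (hn : 2 ≤ n) (hS : IsSurfMeas S) {c : ℝ} (hc : 0 < c) {M : Set (En n)}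
    (hM : M ∈ Kc n) :
    lpSAM p S (c • M) = ENNReal.ofReal (c ^ ((n : ℝ) - p)) • lpSAM p S M := by
  have h0 := Kc_zero_mem hM
  ext s hs
  rw [lpSAM, lpSAM, withDensity_apply _ hs, Measure.smul_apply, withDensity_apply _ hs,
    surf_smul hn hS hc hM.1 hM.2.1, Measure.restrict_smul, lintegral_smul_measure]
  have hpt : ∀ a, ENNReal.ofReal (suppFn (c • M) a ^ (1 - p))
      = ENNReal.ofReal (c ^ (1 - p)) * ENNReal.ofReal (suppFn M a ^ (1 - p)) := fun a => by
    rw [suppFn_smul hc.le, Real.mul_rpow hc.le (suppFn_nonneg h0 hM.1.2.1 a),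
      ENNReal.ofReal_mul (Real.rpow_nonneg hc.le _)]
  simp only [hpt]
  rw [lintegral_const_mul' _ _ ENNReal.ofReal_ne_top, smul_eq_mul, ← mul_assoc,
    ← ENNReal.ofReal_mul (Real.rpow_nonneg hc.le _), ← Real.rpow_add hc]
  congr 2
  ring

lemma lpSAM_norm (hn : 2 ≤ n) (hS : IsSurfMeas S) (hpn : p ≠ (n : ℝ)) {M : Set (En n)}
    (hM : M ∈ Kc n) :
    lpSAM p S (((volume M).toReal ^ (1 / (p - (n : ℝ)))) • M) = nlpSAM p S M := by
  set V := (volume M).toReal with hVdef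
  have hV : 0 < V := ENNReal.toReal_pos (Kc_vol_pos hM).ne' (Kc_vol_ne_top hM)
  have hc : 0 < V ^ (1 / (p - (n : ℝ))) := Real.rpow_pos_of_pos hV _
  rw [lpSAM_smul hn hS hc hM]
  have hsub : p - (n : ℝ) ≠ 0 := sub_ne_zero.2 hpn
  have hpow : (V ^ (1 / (p - (n : ℝ)))) ^ ((n : ℝ) - p) = V⁻¹ := by
    rw [← Real.rpow_mul hV.le]
    have : 1 / (p - (n : ℝ)) * ((n : ℝ) - p) = -1 := by field_simp; ring
    rw [this, Real.rpow_neg_one]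
  rw [hpow, ENNReal.ofReal_inv_of_pos hV, hVdef, ENNReal.ofReal_toReal (Kc_vol_ne_top hM)]
  rfl

end Aux2

section Aux3

variable {n : ℕ} {p : ℝ} {S : Set (En n) → Measure (En n)}

lemma det_toEuclideanLin (A : Matrix (Fin n) (Fin n) ℝ) :
    LinearMap.det (Matrix.toEuclideanLin A) = A.det := by
  have h : (Matrix.toEuclideanLin A : En n →ₗ[ℝ] En n)
      = ((WithLp.linearEquiv 2 ℝ (Fin n → ℝ)).symm : (Fin n → ℝ) →ₗ[ℝ] En n) ∘ₗ
        (Matrix.toLin' A) ∘ₗ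
        (((WithLp.linearEquiv 2 ℝ (Fin n → ℝ)).symm).symm : En n →ₗ[ℝ] (Fin n → ℝ)) := rfl
  rw [h, LinearMap.det_conj, LinearMap.det_toLin']

lemma matAct_smul (A : Matrix (Fin n) (Fin n) ℝ) (c : ℝ) (K : Set (En n)) :
    matAct A (c • K) = c • matAct A K := by
  unfold matAct
  rw [← Set.image_smul, ← Set.image_smul, Set.image_image, Set.image_image]
  exact Set.image_congr fun y _ => map_smul _ _ _

lemma vol_matAct (A : Matrix (Fin n) (Fin n) ℝ) (K : Set (En n)) :
    volume (matAct A K) = ENNReal.ofReal |A.det| * volume K := by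
  rw [matAct, Measure.addHaar_image_linearMap, det_toEuclideanLin]

lemma vol_smul_set (c : ℝ) (K : Set (En n)) :
    volume (c • K) = ENNReal.ofReal (|c| ^ n) * volume K := by
  rw [Measure.addHaar_smul, abs_pow]
  congr 2
  simp [finrank_euclideanSpace_fin]

end Aux3

section Aux4

variable {n : ℕ}

lemma erosion {L : Set (En n)} (hLne : L.Nonempty) (hLc : IsClosed L) (hLconv : Convex ℝ L)
    {x0 : En n} {r ε : ℝ} (hε : 0 ≤ ε)
    (hsub : ∀ z ∈ closedBall x0 r, infDist z L ≤ ε) :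
    closedBall x0 (r - ε) ⊆ L := by
  rcases lt_or_ge r ε with h | hre
  · rw [closedBall_eq_empty.2 (by linarith)]; exact empty_subset _
  intro x hx
  by_contra hxL
  obtain ⟨f, u, hfa, hfx⟩ := geometric_hahn_banach_closed_point hLconv hLc hxL
  set v := (InnerProductSpace.toDual ℝ (En n)).symm f with hv
  have hfv : ∀ y, f y = ⟪v, y⟫ := fun y => (InnerProductSpace.toDual_symm_apply).symm
  have hvne : v ≠ 0 := by
    rintro h0
    obtain ⟨a, ha⟩ := hLne
    have h1 : f a < u := hfa a ha
    have h2 : f a = 0 := by rw [hfv, h0, inner_zero_left]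
    have h3 : f x = 0 := by rw [hfv, h0, inner_zero_left]
    linarith [hfx]
  have hnv : 0 < ‖v‖ := norm_pos_iff.2 hvne
  have key : ∀ z, infDist z L ≤ ε → ⟪v, z⟫ ≤ u + ε * ‖v‖ := by
    intro z hz
    obtain ⟨a, haL, hda⟩ := hLc.exists_infDist_eq_dist hLne z
    have hdza : dist z a ≤ ε := by rw [← hda]; exact hz
    have hsplit : ⟪v, z⟫ = ⟪v, a⟫ + ⟪v, z - a⟫ := by rw [inner_sub_right]; ring
    rw [hsplit]
    have h1 : ⟪v, a⟫ < u := by rw [← hfv]; exact hfa a haL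
    have h2 : ⟪v, z - a⟫ ≤ ‖v‖ * ‖z - a‖ := real_inner_le_norm v (z - a)
    have h3 : ‖z - a‖ ≤ ε := by rw [← dist_eq_norm]; exact hdza
    nlinarith [hnv]
  have hr0 : 0 ≤ r := le_trans hε hre
  have hz0 : x0 + (r / ‖v‖) • v ∈ closedBall x0 r := by
    rw [mem_closedBall, dist_eq_norm]
    simp only [add_sub_cancel_left]
    rw [norm_smul, Real.norm_eq_abs, abs_of_nonneg (div_nonneg hr0 hnv.le),
      div_mul_cancel₀ _ hnv.ne']
  have h4 := key _ (hsub _ hz0)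
  rw [inner_add_right, real_inner_smul_right, real_inner_self_eq_norm_sq] at h4
  have h5 : (r / ‖v‖) * ‖v‖ ^ 2 = r * ‖v‖ := by field_simp
  have h6 : ⟪v, x⟫ ≤ ⟪v, x0⟫ + ‖v‖ * ‖x - x0‖ := by
    have h2 := real_inner_le_norm v (x - x0)
    have heq : ⟪v, x⟫ = ⟪v, x0⟫ + ⟪v, x - x0⟫ := by rw [inner_sub_right]; ring
    linarith
  have h7 : ‖x - x0‖ ≤ r - ε := by rw [← dist_eq_norm]; exact mem_closedBall.1 hx
  have hux : u < ⟪v, x⟫ := by rw [← hfv]; exact hfx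
  nlinarith [mul_le_mul_of_nonneg_left h7 hnv.le]

lemma shrink_subset {L M : Set (En n)} (hLne : L.Nonempty) (hLc : IsClosed L)
    (hLconv : Convex ℝ L) {x0 : En n} {r ε : ℝ} (hε : 0 < ε) (hεr : ε < r)
    (hball : closedBall x0 r ⊆ M)
    (hnear : ∀ z ∈ M, infDist z L ≤ ε) :
    (fun y => x0 + (1 - ε / r) • (y - x0)) '' M ⊆ L := by
  have hr : 0 < r := lt_trans hε hεr
  have hero : closedBall x0 (r - ε) ⊆ L :=
    erosion hLne hLc hLconv hε.le (fun z hz => hnear z (hball hz))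
  rintro _ ⟨y, hy, rfl⟩
  set lam : ℝ := 1 - ε / r with hlam
  have h1lam : 1 - lam = ε / r := by rw [hlam]; ring
  have hlam0 : 0 ≤ lam := by
    rw [hlam]
    have := (div_le_one hr).2 hεr.le
    linarith
  have h1lam0 : 0 < 1 - lam := by rw [h1lam]; positivity
  obtain ⟨a, haL, hda⟩ := hLc.exists_infDist_eq_dist hLne y
  have hya : ‖y - a‖ ≤ ε := by
    rw [← dist_eq_norm, ← hda]
    exact hnear y hy
  set b : En n := x0 + ((1 - lam)⁻¹ * lam) • (y - a) with hb
  have hc0 : 0 ≤ (1 - lam)⁻¹ * lam := mul_nonneg (by positivity) hlam0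
  have hbmem : b ∈ closedBall x0 (r - ε) := by
    rw [mem_closedBall, dist_eq_norm, hb]
    simp only [add_sub_cancel_left]
    rw [norm_smul, Real.norm_eq_abs, abs_of_nonneg hc0]
    have h1 : (1 - lam)⁻¹ * lam * ‖y - a‖ ≤ (1 - lam)⁻¹ * lam * ε :=
      mul_le_mul_of_nonneg_left hya hc0
    have h2 : (1 - lam)⁻¹ * lam * ε = r - ε := by
      rw [h1lam, hlam]
      field_simp
    linarith
  have hc' : (1 - lam) * ((1 - lam)⁻¹ * lam) = lam := by field_simp
  have hcomb : x0 + lam • (y - x0) = lam • a + (1 - lam) • b := by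
    rw [hb, smul_add, smul_smul, hc']
    module
  show x0 + lam • (y - x0) ∈ L
  rw [hcomb]
  exact hLconv haL (hero hbmem) hlam0 h1lam0.le (by ring)

lemma vol_lower {L M : Set (En n)} (hLne : L.Nonempty) (hLc : IsClosed L) (hLconv : Convex ℝ L)
    {x0 : En n} {r ε : ℝ} (hε : 0 < ε) (hεr : ε < r) (hball : closedBall x0 r ⊆ M)
    (hnear : ∀ z ∈ M, infDist z L ≤ ε) :
    ENNReal.ofReal ((1 - ε / r) ^ n) * volume M ≤ volume L := by
  have hr : 0 < r := lt_trans hε hεr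
  have h := measure_mono (μ := volume) (shrink_subset hLne hLc hLconv hε hεr hball hnear)
  refine le_trans (le_of_eq ?_) h
  have himg : (fun y => x0 + (1 - ε / r) • (y - x0)) '' M
      = (x0 - (1 - ε / r) • x0) +ᵥ ((1 - ε / r) • M) := by
    rw [← Set.image_smul, ← Set.image_vadd, Set.image_image]
    refine (Set.image_congr fun y _ => ?_).symm
    rw [vadd_eq_add, smul_sub]
    abel
  have hnn : 0 ≤ 1 - ε / r := by
    have := (div_le_one hr).2 hεr.le
    linarith
  rw [himg, measure_vadd, vol_smul_set, abs_of_nonneg hnn]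

end Aux4

section Aux5

variable {n : ℕ}

lemma volCont {M : Set (En n)} (hM : M ∈ Kc n) (Mi : ℕ → Set (En n))
    (hMi : ∀ i, Mi i ∈ Kc n)
    (hd : Tendsto (fun i => hausdorffDist (Mi i) M) atTop (𝓝 0)) :
    Tendsto (fun i => (volume (Mi i)).toReal) atTop (𝓝 ((volume M).toReal)) := by
  obtain ⟨x1, hx1⟩ := hM.2.1
  obtain ⟨r, hr, hball⟩ : ∃ r > 0, closedBall x1 r ⊆ M := by
    obtain ⟨δ, hδ, hb⟩ := Metric.mem_nhds_iff.1 (mem_interior_iff_mem_nhds.1 hx1)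
    exact ⟨δ / 2, by positivity,
      (closedBall_subset_ball (by linarith)).trans hb⟩
  have hMc : IsClosed M := hM.1.2.1.isClosed
  have hMne : M.Nonempty := hM.1.1
  have hMb : Bornology.IsBounded M := hM.1.2.1.isBounded
  set d : ℕ → ℝ := fun i => hausdorffDist (Mi i) M with hddef
  have hfin : ∀ i, EMetric.hausdorffEdist (Mi i) M ≠ ⊤ := fun i =>
    hausdorffEdist_ne_top_of_nonempty_of_bounded (hMi i).1.1 hMne
      ((hMi i).1.2.1.isBounded) hMb
  have hup : ∀ i, volume (Mi i) ≤ volume (cthickening (d i) M) := by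
    intro i
    apply measure_mono
    intro x hx
    rw [mem_cthickening_iff,
      ENNReal.le_ofReal_iff_toReal_le (infEdist_ne_top hMne) hausdorffDist_nonneg]
    exact infDist_le_hausdorffDist_of_mem hx (hfin i)
  have hcth_ne : ∀ δ : ℝ, volume (cthickening δ M) ≠ ⊤ := fun δ =>
    ((isCompact_of_isClosed_isBounded isClosed_cthickening hMb.cthickening).measure_lt_top).ne
  have htend : Tendsto (fun i => (volume (cthickening (d i) M)).toReal) atTop
      (𝓝 ((volume M).toReal)) := by
    have h1 : Tendsto (fun δ : ℝ => volume (cthickening δ M)) (𝓝 0) (𝓝 (volume M)) :=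
      tendsto_measure_cthickening_of_isClosed ⟨1, one_pos, hcth_ne 1⟩ hMc
    exact (ENNReal.tendsto_toReal (Kc_vol_ne_top hM)).comp (h1.comp hd)
  set V : ℝ := (volume M).toReal with hVdef
  rw [Metric.tendsto_atTop]
  intro η hη
  have hcont : ContinuousAt (fun t : ℝ => (1 - t / r) ^ n * V) 0 := by fun_prop
  obtain ⟨δ, hδpos, hδ⟩ := Metric.continuousAt_iff.1 hcont η hη
  set ε : ℝ := min (δ / 2) (r / 2) with hεdef
  have hεpos : 0 < ε := lt_min (by positivity) (by positivity)
  have hεr : ε < r := lt_of_le_of_lt (min_le_right _ _) (by linarith)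
  have hεδ : dist ε 0 < δ := by
    rw [Real.dist_eq, sub_zero, abs_of_pos hεpos]
    exact lt_of_le_of_lt (min_le_left _ _) (by linarith)
  have hclose := hδ hεδ
  rw [Real.dist_eq] at hclose
  simp only [div_zero, zero_div, sub_zero, one_pow, one_mul] at hclose
  replace hclose : V - η < (1 - ε / r) ^ n * V := by
    have := abs_lt.1 hclose
    linarith [this.1]
  obtain ⟨N1, hN1⟩ := (Metric.tendsto_atTop.1 htend) η hη
  obtain ⟨N2, hN2⟩ := (Metric.tendsto_atTop.1 hd) ε hεpos
  refine ⟨max N1 N2, fun i hi => ?_⟩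
  have hi1 := hN1 i (le_trans (le_max_left _ _) hi)
  have hi2 := hN2 i (le_trans (le_max_right _ _) hi)
  rw [Real.dist_eq] at hi1 hi2 ⊢
  rw [sub_zero] at hi2
  have hdi : d i ≤ ε := le_of_lt (lt_of_abs_lt hi2)
  -- upper bound
  have hVi_le : (volume (Mi i)).toReal ≤ (volume (cthickening (d i) M)).toReal :=
    ENNReal.toReal_mono (hcth_ne _) (hup i)
  have hup' : (volume (Mi i)).toReal < V + η := by
    have := abs_lt.1 hi1
    linarith [this.2]
  -- lower bound
  have hnear : ∀ z ∈ M, infDist z (Mi i) ≤ ε := by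
    intro z hz
    have hfin' : EMetric.hausdorffEdist M (Mi i) ≠ ⊤ := by
      rw [EMetric.hausdorffEdist, Metric.hausdorffEDist_comm]; exact hfin i
    have h1 : infDist z (Mi i) ≤ hausdorffDist M (Mi i) :=
      infDist_le_hausdorffDist_of_mem hz hfin'
    rw [hausdorffDist_comm] at h1
    exact le_trans h1 hdi
  have hlow := vol_lower (hMi i).1.1 ((hMi i).1.2.1.isClosed) (hMi i).1.2.2 hεpos hεr
    hball hnear
  have hnn : 0 ≤ 1 - ε / r := by
    have := (div_le_one hr).2 hεr.le
    linarith
  have hlow' : (1 - ε / r) ^ n * V ≤ (volume (Mi i)).toReal := by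
    have h2 := ENNReal.toReal_mono (Kc_vol_ne_top (hMi i)) hlow
    rwa [ENNReal.toReal_mul, ENNReal.toReal_ofReal (by positivity)] at h2
  rw [abs_lt]
  constructor <;> linarith
end Aux5

section Aux6

variable {n : ℕ}

lemma hdist_smul_side {a : ℝ} (ha : 0 ≤ a) {A B : Set (En n)}
    (hB : IsClosed B) (hBne : B.Nonempty) (hfin : EMetric.hausdorffEdist A B ≠ ⊤) :
    ∀ x ∈ a • A, ∃ y ∈ a • B, dist x y ≤ a * hausdorffDist A B := by
  rintro _ ⟨x, hx, rfl⟩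
  obtain ⟨y, hyB, hdy⟩ := hB.exists_infDist_eq_dist hBne x
  refine ⟨a • y, Set.smul_mem_smul_set hyB, ?_⟩
  rw [dist_smul₀, Real.norm_eq_abs, abs_of_nonneg ha]
  refine mul_le_mul_of_nonneg_left ?_ ha
  rw [← hdy]
  exact infDist_le_hausdorffDist_of_mem hx hfin

lemma hdist_smul_le {a : ℝ} (ha : 0 ≤ a) {A B : Set (En n)}
    (hA : IsCompact A) (hAne : A.Nonempty) (hB : IsCompact B) (hBne : B.Nonempty) :
    hausdorffDist (a • A) (a • B) ≤ a * hausdorffDist A B := by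
  have hfin : EMetric.hausdorffEdist A B ≠ ⊤ :=
    hausdorffEdist_ne_top_of_nonempty_of_bounded hAne hBne hA.isBounded hB.isBounded
  have hfin' : EMetric.hausdorffEdist B A ≠ ⊤ := by rwa [EMetric.hausdorffEdist, Metric.hausdorffEDist_comm]
  refine hausdorffDist_le_of_mem_dist (mul_nonneg ha hausdorffDist_nonneg) (hdist_smul_side ha hB.isClosed hBne hfin)
    (fun x hx => ?_)
  obtain ⟨y, hy, hxy⟩ := hdist_smul_side ha hA.isClosed hAne hfin' x hx
  exact ⟨y, hy, by rwa [hausdorffDist_comm] at hxy⟩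

lemma hdist_smul_sub {a b R : ℝ} (hR : 0 ≤ R) {B : Set (En n)}
    (hBR : ∀ x ∈ B, ‖x‖ ≤ R) :
    hausdorffDist (a • B) (b • B) ≤ |a - b| * R := by
  refine hausdorffDist_le_of_mem_dist (mul_nonneg (abs_nonneg _) hR) ?_ ?_
  · rintro _ ⟨x, hx, rfl⟩
    refine ⟨b • x, Set.smul_mem_smul_set hx, ?_⟩
    rw [dist_eq_norm, ← sub_smul, norm_smul, Real.norm_eq_abs]
    exact mul_le_mul_of_nonneg_left (hBR x hx) (abs_nonneg _)
  · rintro _ ⟨x, hx, rfl⟩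
    refine ⟨a • x, Set.smul_mem_smul_set hx, ?_⟩
    rw [dist_eq_norm, ← sub_smul, norm_smul, Real.norm_eq_abs, abs_sub_comm]
    exact mul_le_mul_of_nonneg_left (hBR x hx) (abs_nonneg _)

end Aux6
/-- **Lemma 5.2.** If `Z̃` is a normalized symmetric `L_p`-Blaschke valuation (`p ≠ n`),
then `ZK = V(Z̃K)^{1/(p-n)} Z̃K` is a symmetric `L_p`-Blaschke valuation, which is
continuous / `SL(n)` covariant / `SL(n)` contravariant / homogeneous of degree
`qp/(p-n)` whenever `Z̃` is continuous / covariant / contravariant / homogeneous of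
degree `q`. -/
theorem stmt_16 {n : ℕ} (hn : 2 ≤ n) {p : ℝ} (hp : 1 < p) (hpn : p ≠ (n : ℝ))
    (S : Set (En n) → Measure (En n)) (hS : IsSurfMeas S)
    (Zt : Set (En n) → Set (En n)) (hZt : IsNormBlaschkeVal p S Zt) :
    IsBlaschkeVal p S (fun K => ((volume (Zt K)).toReal ^ (1 / (p - (n : ℝ)))) • Zt K) ∧
    (ContOnQ (Ko n) Zt →
      ContOnQ (Ko n) (fun K => ((volume (Zt K)).toReal ^ (1 / (p - (n : ℝ)))) • Zt K)) ∧
    (SLcov (Ko n) Zt →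
      SLcov (Ko n) (fun K => ((volume (Zt K)).toReal ^ (1 / (p - (n : ℝ)))) • Zt K)) ∧
    (SLcontra (Ko n) Zt →
      SLcontra (Ko n) (fun K => ((volume (Zt K)).toReal ^ (1 / (p - (n : ℝ)))) • Zt K)) ∧
    (∀ q : ℝ, HomogDeg (Ko n) Zt q →
      HomogDeg (Ko n) (fun K => ((volume (Zt K)).toReal ^ (1 / (p - (n : ℝ)))) • Zt K)
        (q * p / (p - (n : ℝ)))) := by
  obtain ⟨hZt1, hZt2⟩ := hZt
  have hsub : p - (n : ℝ) ≠ 0 := sub_ne_zero.2 hpn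
  have hVpos : ∀ {M : Set (En n)}, M ∈ Kc n → 0 < (volume M).toReal := fun hM =>
    ENNReal.toReal_pos (Kc_vol_pos hM).ne' (Kc_vol_ne_top hM)
  have hcpos : ∀ {M : Set (En n)}, M ∈ Kc n →
      0 < (volume M).toReal ^ (1 / (p - (n : ℝ))) := fun hM =>
    Real.rpow_pos_of_pos (hVpos hM) _
  refine ⟨⟨fun K hK => smul_mem_Kc (hcpos (hZt1 K hK)) (hZt1 K hK),
    fun K L hK hL hKL hKL' => ?_⟩, ?_, ?_, ?_, ?_⟩
  · simp only
    rw [lpSAM_norm hn hS hpn (hZt1 _ hKL), lpSAM_norm hn hS hpn (hZt1 _ hKL'),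
      lpSAM_norm hn hS hpn (hZt1 _ hK), lpSAM_norm hn hS hpn (hZt1 _ hL)]
    exact hZt2 K L hK hL hKL hKL'
  · -- continuity
    intro hcont K hK F hF hFK
    simp only
    have hM : Zt K ∈ Kc n := hZt1 K hK
    have hMi : ∀ i, Zt (F i) ∈ Kc n := fun i => hZt1 _ (hF i)
    have h1 : Tendsto (fun i => hausdorffDist (Zt (F i)) (Zt K)) atTop (𝓝 0) :=
      hcont K hK F hF hFK
    have hVt := volCont hM _ hMi h1
    set e : ℝ := 1 / (p - (n : ℝ)) with hedef
    set c : ℝ := (volume (Zt K)).toReal ^ e with hcdef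
    set ci : ℕ → ℝ := fun i => (volume (Zt (F i))).toReal ^ e with hcidef
    have hc : Tendsto ci atTop (𝓝 c) := by
      have hrc : ContinuousAt (fun x : ℝ => x ^ e) ((volume (Zt K)).toReal) :=
        Real.continuousAt_rpow_const _ _ (Or.inl (hVpos hM).ne')
      exact hrc.tendsto.comp hVt
    obtain ⟨R, hR⟩ := (isBounded_iff_forall_norm_le).1 hM.1.2.1.isBounded
    have hR0 : 0 ≤ R := by
      obtain ⟨x, hx⟩ := hM.1.1
      exact le_trans (norm_nonneg x) (hR x hx)
    have hbound : ∀ i, hausdorffDist (ci i • Zt (F i)) (c • Zt K)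
        ≤ ci i * hausdorffDist (Zt (F i)) (Zt K) + |ci i - c| * R := by
      intro i
      have hfin : EMetric.hausdorffEdist (ci i • Zt (F i)) (ci i • Zt K) ≠ ⊤ := by
        apply hausdorffEdist_ne_top_of_nonempty_of_bounded
        · exact (hMi i).1.1.smul_set
        · exact hM.1.1.smul_set
        · exact (smul_CB (hcpos (hMi i)) (hMi i).1).2.1.isBounded
        · exact (smul_CB (hcpos (hMi i)) hM.1).2.1.isBounded
      refine le_trans (hausdorffDist_triangle hfin) (add_le_add ?_ ?_)
      · exact hdist_smul_le (hcpos (hMi i)).le (hMi i).1.2.1 (hMi i).1.1 hM.1.2.1 hM.1.1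
      · exact hdist_smul_sub hR0 hR
    have hlim : Tendsto (fun i => ci i * hausdorffDist (Zt (F i)) (Zt K) + |ci i - c| * R)
        atTop (𝓝 0) := by
      have l1 : Tendsto (fun i => ci i * hausdorffDist (Zt (F i)) (Zt K)) atTop (𝓝 (c * 0)) :=
        hc.mul h1
      have l2 : Tendsto (fun i => |ci i - c| * R) atTop (𝓝 (|c - c| * R)) :=
        ((hc.sub tendsto_const_nhds).abs).mul_const R
      have := l1.add l2
      simpa using this
    exact squeeze_zero (fun i => hausdorffDist_nonneg) hbound hlim
  · -- SL covariance
    intro hcov φ K hK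
    simp only
    rw [hcov φ K hK]
    have hveq : volume (matAct (φ : Matrix (Fin n) (Fin n) ℝ) (Zt K)) = volume (Zt K) := by
      rw [vol_matAct, Matrix.SpecialLinearGroup.det_coe, abs_one, ENNReal.ofReal_one, one_mul]
    rw [hveq, ← matAct_smul]
  · -- SL contravariance
    intro hcov φ K hK
    simp only
    rw [hcov φ K hK]
    have hdet : (((φ : Matrix (Fin n) (Fin n) ℝ)ᵀ)⁻¹).det = 1 := by
      rw [Matrix.det_nonsing_inv, Matrix.det_transpose, Matrix.SpecialLinearGroup.det_coe,
        Ring.inverse_one]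
    have hveq : volume (matAct (((φ : Matrix (Fin n) (Fin n) ℝ)ᵀ)⁻¹) (Zt K)) = volume (Zt K) := by
      rw [vol_matAct, hdet, abs_one, ENNReal.ofReal_one, one_mul]
    rw [hveq, ← matAct_smul]
  · -- homogeneity
    intro q hq K hK lam hlam
    simp only
    rw [hq K hK lam hlam]
    have hM : Zt K ∈ Kc n := hZt1 K hK
    have hlq : 0 < lam ^ q := Real.rpow_pos_of_pos hlam q
    set V : ℝ := (volume (Zt K)).toReal with hVdef
    have hV : 0 < V := hVpos hM
    have hveq : (volume ((lam ^ q) • Zt K)).toReal = (lam ^ q) ^ n * V := by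
      rw [vol_smul_set, abs_of_pos hlq, ENNReal.toReal_mul,
        ENNReal.toReal_ofReal (by positivity)]
    rw [hveq, smul_smul, smul_smul]
    congr 1
    set e : ℝ := 1 / (p - (n : ℝ)) with hedef
    rw [← Real.rpow_natCast (lam ^ q) n, ← Real.rpow_mul hlam.le,
      Real.mul_rpow (Real.rpow_nonneg hlam.le _) hV.le, ← Real.rpow_mul hlam.le,
      mul_right_comm, ← Real.rpow_add hlam]
    congr 1
    rw [hedef]
    field_simp
    ring

end
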